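/- In a Fitch graph the unidirectional edges form a transitive relation: let V be a finite type, E a Fitch graph on V, and x, y, z vertices such that E x y and not E y x, and E y z and not E z y. Then E x z holds and E z x does not. In particular, a Fitch graph contains none of the forbidden induced configurations F2 (a directed 3-cycle of unidirectional edges), F3 (unidirectional edges x→y→z with x and z non-adjacent), and F4 (unidirectional edges x→y→z together with a bidirectional edge between x and z). -/
import Mathlib


/-- `IsFitchOn E S` : the digraph `E` is a Fitch graph on the vertex set `S`. -/
inductive IsFitchOn {V : Type*} (E : V → V → Prop) : Set V → Prop where
  | edgeless (S : Set V) (h : ∀ x ∈ S, ∀ y ∈ S, ¬ E x y) : IsFitchOn E S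
  | join (A B : Set V) (hdisj : Disjoint A B) (hA : A.Nonempty) (hB : B.Nonempty)
      (fA : IsFitchOn E A) (fB : IsFitchOn E B)
      (h : ∀ a ∈ A, ∀ b ∈ B, E a b ∧ E b a) : IsFitchOn E (A ∪ B)
  | dirJoin (A B : Set V) (hdisj : Disjoint A B) (hA : A.Nonempty) (hB : B.Nonempty)
      (hAedgeless : ∀ x ∈ A, ∀ y ∈ A, ¬ E x y) (fB : IsFitchOn E B)
      (h : ∀ a ∈ A, ∀ b ∈ B, E a b ∧ ¬ E b a) : IsFitchOn E (A ∪ B)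

lemma fitch_aux {V : Type*} {E : V → V → Prop} {S : Set V} (hE : IsFitchOn E S) :
    ∀ x ∈ S, ∀ y ∈ S, ∀ z ∈ S, E x y → ¬ E y x → E y z → ¬ E z y → E x z ∧ ¬ E z x := by
  induction hE with
  | edgeless S h =>
    intro x hx y hy z hz hxy _ _ _
    exact absurd hxy (h x hx y hy)
  | join A B hdisj hA hB fA fB h ihA ihB =>
    intro x hx y hy z hz hxy hyx hyz hzy
    have hcase : ∀ u ∈ A ∪ B, ∀ v ∈ A ∪ B, ¬ E v u → (u ∈ A ∧ v ∈ A) ∨ (u ∈ B ∧ v ∈ B) := by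
      intro u hu v hv hvu
      rcases hu with hu | hu <;> rcases hv with hv | hv
      · exact Or.inl ⟨hu, hv⟩
      · exact absurd (h u hu v hv).2 hvu
      · exact absurd (h v hv u hu).1 hvu
      · exact Or.inr ⟨hu, hv⟩
    rcases hcase x hx y hy hyx with ⟨hx', hy'⟩ | ⟨hx', hy'⟩ <;>
      rcases hcase y hy z hz hzy with ⟨hy'', hz'⟩ | ⟨hy'', hz'⟩
    · exact ihA x hx' y hy' z hz' hxy hyx hyz hzy
    · exact absurd (hdisj.ne_of_mem hy' hy'' rfl) (fun h => h)
    · exact absurd (hdisj.ne_of_mem hy'' hy' rfl) (fun h => h)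
    · exact ihB x hx' y hy' z hz' hxy hyx hyz hzy
  | dirJoin A B hdisj hA hB hAedgeless fB h ihB =>
    intro x hx y hy z hz hxy hyx hyz hzy
    rcases hy with hy | hy
    · -- y ∈ A
      rcases hx with hx | hx
      · exact absurd hxy (hAedgeless x hx y hy)
      · exact absurd (h y hy x hx).1 hyx
    · -- y ∈ B
      rcases hz with hz | hz
      · exact absurd (h z hz y hy).1 hzy
      · rcases hx with hx | hx
        · exact h x hx z hz
        · exact ihB x hx y hy z hz hxy hyx hyz hzy

/-- In a Fitch graph, the unidirectional edges form a transitive relation. -/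
theorem fitch_unidirectional_transitive {V : Type*} [Fintype V]
    (E : V → V → Prop) (hirr : Irreflexive E) (hE : IsFitchOn E Set.univ)
    (x y z : V)
    (hxy : E x y) (hyx : ¬ E y x) (hyz : E y z) (hzy : ¬ E z y) :
    E x z ∧ ¬ E z x :=
  fitch_aux hE x trivial y trivial z trivial hxy hyx hyz hzy
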